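/- arXiv:math/0607574 — 2 statements merged into one kernel-verified Lean document; each statement's English description precedes it below -/
import Mathlib

section
/- For every A > 0 there exist constants C₁, C₂ > 0 such that the following holds. Let a : ℂ → [0,∞) be a smooth function with sup_ℂ a ≤ A and suppose μ := a·σ is a probability measure on ℂ. Let 0 < η < 1, R ≥ 6, and let M ≥ 2 be an integer such that ∫_{ℂ\Q_R} |log|ζ|| dμ(ζ) < η, μ(ℂ\Q_R) = 1/M, 1/M < η, and a(z) ≤ η for all z with |z| > R/3. Define V_∞(z) := ∫_{ℂ\Q_R} log|1 − z/ζ| dμ(ζ), r_∞ := exp(M·∫_{ℂ\Q_R} log|ζ| dμ(ζ)), let w_∞ ∈ ℂ satisfy |w_∞| = 10·r_∞, and set E_{w_∞} := {z ∈ ℂ : |z − w_∞| < |w_∞|/20}. Then |V_∞(z) − (1/M)·log|1 − z/w_∞|| ≤ C₁·η for all z ∉ E_{w_∞}, and (1/M)·log|1 − z/w_∞| ≤ V_∞(z) + C₂·η for all z ∈ E_{w_∞}. -/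
open MeasureTheory Filter Topology Set
open scoped ENNReal NNReal

noncomputable section

/-- The open square `Q_R = {x + iy : |x| < R, |y| < R}`. -/
def QR (R : ℝ) : Set ℂ := {z : ℂ | |z.re| < R ∧ |z.im| < R}

/-- `log |x|`, with value `-∞` at `x = 0`. -/
def elog (x : ℂ) : EReal :=
  if x = 0 then ⊥ else ((Real.log (‖x‖) : ℝ) : EReal)

lemma logMono {x y : ℝ} (hx : 0 < x) (h : x ≤ y) : Real.log x ≤ Real.log y :=
  (Real.log_le_log_iff hx (hx.trans_le h)).2 h

lemma layercake_log_bound (ν : Measure ℂ) (z : ℂ) (c : ℝ) (hc : 0 ≤ c)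
    (hb : ∀ r : ℝ, 0 < r → ν (Metric.ball z r) ≤ ENNReal.ofReal (c * r ^ 2)) :
    ∫⁻ ζ, ENNReal.ofReal (max (-Real.log (‖ζ - z‖)) 0) ∂ν
      ≤ ENNReal.ofReal (c * (1 / 2)) := by
  have hmeas : Measurable fun ζ : ℂ => max (-Real.log (‖ζ - z‖)) 0 :=
    ((Real.measurable_log.comp
      (continuous_norm.measurable.comp (measurable_id.sub_const z))).neg).max
      measurable_const
  have key := lintegral_eq_lintegral_meas_lt ν
    (f := fun ζ : ℂ => max (-Real.log (‖ζ - z‖)) 0)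
    (ae_of_all _ fun ζ => le_max_right _ _) hmeas.aemeasurable
  rw [key]
  have step : ∀ t ∈ Set.Ioi (0:ℝ),
      ν {ζ | t < max (-Real.log (‖ζ - z‖)) 0}
        ≤ ENNReal.ofReal (c * Real.exp (-(2 * t))) := by
    intro t ht
    have ht0 : (0:ℝ) < t := ht
    have hsub : {ζ : ℂ | t < max (-Real.log (‖ζ - z‖)) 0}
        ⊆ Metric.ball z (Real.exp (-t)) := by
      intro ζ hζ
      simp only [Set.mem_setOf_eq] at hζ
      have h1 : t < -Real.log (‖ζ - z‖) := by
        rcases max_cases (-Real.log (‖ζ - z‖)) (0:ℝ) with ⟨h, _⟩ | ⟨h, _⟩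
        · rwa [h] at hζ
        · rw [h] at hζ; exact absurd hζ (not_lt.2 ht0.le)
      have h2 : Real.log (‖ζ - z‖) < -t := by linarith
      have h3 : ‖ζ - z‖ < Real.exp (-t) := by
        rcases eq_or_lt_of_le (norm_nonneg (ζ - z)) with h0 | h0
        · rw [← h0]; exact Real.exp_pos _
        · exact (Real.log_lt_iff_lt_exp h0).1 h2
      simpa [Metric.mem_ball, Complex.dist_eq] using h3
    calc ν {ζ | t < max (-Real.log (‖ζ - z‖)) 0}
        ≤ ν (Metric.ball z (Real.exp (-t))) := measure_mono hsub
      _ ≤ ENNReal.ofReal (c * Real.exp (-t) ^ 2) := hb _ (Real.exp_pos _)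
      _ = ENNReal.ofReal (c * Real.exp (-(2 * t))) := by
          congr 1
          rw [sq, ← Real.exp_add]
          ring_nf
  have hint : IntegrableOn (fun t : ℝ => c * Real.exp (-(2 * t))) (Set.Ioi 0) := by
    have := (exp_neg_integrableOn_Ioi 0 (by norm_num : (0:ℝ) < 2)).const_mul c
    simpa [neg_mul, IntegrableOn] using this
  calc ∫⁻ t in Set.Ioi 0, ν {ζ | t < max (-Real.log (‖ζ - z‖)) 0}
      ≤ ∫⁻ t in Set.Ioi 0, ENNReal.ofReal (c * Real.exp (-(2 * t))) := by
        refine setLIntegral_mono (ENNReal.measurable_ofReal.comp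
          ((measurable_const (a := c)).mul (Real.measurable_exp.comp
            ((measurable_const (a := (2:ℝ))).mul measurable_id).neg))) step
    _ = ENNReal.ofReal (∫ t in Set.Ioi 0, c * Real.exp (-(2 * t))) := by
        rw [ofReal_integral_eq_lintegral_ofReal hint
          (ae_of_all _ fun t => by positivity)]
    _ = ENNReal.ofReal (c * (1 / 2)) := by
        congr 1
        rw [MeasureTheory.integral_const_mul]
        congr 1
        have h2 : (0:ℝ) < 2 := by norm_num
        have := integral_comp_mul_left_Ioi (fun x => Real.exp (-x)) 0 h2
        simp only [mul_zero] at this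
        calc ∫ t in Set.Ioi (0:ℝ), Real.exp (-(2 * t))
            = 2⁻¹ • ∫ x in Set.Ioi (0:ℝ), Real.exp (-x) := this
          _ = 1 / 2 := by rw [integral_exp_neg_Ioi_zero]; norm_num

set_option maxHeartbeats 2000000 in
theorem statement7 (A : ℝ) (hA : 0 < A) :
    ∃ C₁ C₂ : ℝ, 0 < C₁ ∧ 0 < C₂ ∧
      ∀ (a : ℂ → ℝ) (μ : Measure ℂ) (η R : ℝ) (M : ℕ)
        (Vinf : ℂ → ℝ) (rinf : ℝ) (winf : ℂ),
        ContDiff ℝ (⊤ : ℕ∞) a → (∀ z, 0 ≤ a z) → (∀ z, a z ≤ A) →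
        μ = (volume : Measure ℂ).withDensity (fun z => ENNReal.ofReal (a z)) →
        IsProbabilityMeasure μ →
        0 < η → η < 1 → 6 ≤ R → 2 ≤ M →
        IntegrableOn (fun ζ => Real.log (‖ζ‖)) (QR R)ᶜ μ →
        (∫ ζ in (QR R)ᶜ, |Real.log (‖ζ‖)| ∂μ) < η →
        μ (QR R)ᶜ = (M : ENNReal)⁻¹ →
        ((M : ℝ))⁻¹ < η →
        (∀ z : ℂ, R / 3 < ‖z‖ → a z ≤ η) →
        (∀ z, Vinf z = ∫ ζ in (QR R)ᶜ, Real.log (‖1 - z / ζ‖) ∂μ) →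
        rinf = Real.exp ((M : ℝ) * ∫ ζ in (QR R)ᶜ, Real.log (‖ζ‖) ∂μ) →
        ‖winf‖ = 10 * rinf →
        (∀ z : ℂ, z ∉ {z : ℂ | ‖z - winf‖ < ‖winf‖ / 20} →
          |Vinf z - (M : ℝ)⁻¹ * Real.log (‖1 - z / winf‖)| ≤ C₁ * η) ∧
        (∀ z : ℂ, z ∈ {z : ℂ | ‖z - winf‖ < ‖winf‖ / 20} →
          ((M : ℝ)⁻¹ : EReal) * elog (1 - z / winf) ≤ ((Vinf z + C₂ * η : ℝ) : EReal)) := by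
  refine ⟨100, 10, by norm_num, by norm_num, ?_⟩
  intro a μ η R M Vinf rinf winf _ha_smooth ha0 _haA hμ _hprob hη hη1 hR hM hIint hIabs hμS hMη
    haη hV hr hw
  -- Basic facts about the square and the measure
  have hR0 : (0:ℝ) < R := by linarith
  have hQRopen : IsOpen (QR R) := by
    have : QR R = {z : ℂ | |z.re| < R} ∩ {z : ℂ | |z.im| < R} := rfl
    rw [this]
    exact (isOpen_lt (continuous_abs.comp Complex.continuous_re) continuous_const).inter
      (isOpen_lt (continuous_abs.comp Complex.continuous_im) continuous_const)
  have hSm : MeasurableSet (QR R)ᶜ := hQRopen.measurableSet.compl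
  have hSR : ∀ ζ ∈ (QR R)ᶜ, R ≤ ‖ζ‖ := by
    intro ζ hζ
    by_contra h
    push_neg at h
    exact hζ ⟨lt_of_le_of_lt (Complex.abs_re_le_norm ζ) h,
      lt_of_le_of_lt (Complex.abs_im_le_norm ζ) h⟩
  have hS1 : ∀ ζ ∈ (QR R)ᶜ, (1:ℝ) ≤ ‖ζ‖ := fun ζ hζ => by
    have := hSR ζ hζ; linarith
  have hSlog : ∀ ζ ∈ (QR R)ᶜ, (0:ℝ) ≤ Real.log (‖ζ‖) := fun ζ hζ =>
    Real.log_nonneg (hS1 ζ hζ)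
  have hM2 : (2:ℝ) ≤ (M:ℝ) := by exact_mod_cast hM
  have hMne : (M:ℝ) ≠ 0 := by linarith
  have hm_pos : (0:ℝ) < (M:ℝ)⁻¹ := by positivity
  have hMm : (M:ℝ) * (M:ℝ)⁻¹ = 1 := mul_inv_cancel₀ hMne
  have hμfin : μ (QR R)ᶜ ≠ ⊤ := by
    rw [hμS]
    exact ENNReal.inv_ne_top.2 (by exact_mod_cast (by omega : M ≠ 0))
  have hμfin' : μ (QR R)ᶜ < ⊤ := lt_top_iff_ne_top.2 hμfin
  have hm : (μ (QR R)ᶜ).toReal = (M:ℝ)⁻¹ := by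
    rw [hμS, ENNReal.toReal_inv]
    simp
  have hconstInt : ∀ c : ℝ, IntegrableOn (fun _ : ℂ => c) (QR R)ᶜ μ := fun c =>
    integrableOn_const hμfin
  -- Facts about I
  have hI0 : 0 ≤ ∫ ζ in (QR R)ᶜ, Real.log (‖ζ‖) ∂μ :=
    setIntegral_nonneg hSm hSlog
  have hIη : (∫ ζ in (QR R)ᶜ, Real.log (‖ζ‖) ∂μ) < η := by
    have heq : (∫ ζ in (QR R)ᶜ, Real.log (‖ζ‖) ∂μ)
        = ∫ ζ in (QR R)ᶜ, |Real.log (‖ζ‖)| ∂μ :=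
      setIntegral_congr_fun hSm fun ζ hζ => (abs_of_nonneg (hSlog ζ hζ)).symm
    rw [heq]; exact hIabs
  have hIlb : (M:ℝ)⁻¹ * Real.log R ≤ ∫ ζ in (QR R)ᶜ, Real.log (‖ζ‖) ∂μ := by
    have h := setIntegral_mono_on (hconstInt (Real.log R)) hIint hSm
      (fun ζ hζ => logMono hR0 (hSR ζ hζ))
    rwa [setIntegral_const, smul_eq_mul, measureReal_def, hm] at h
  -- null singletons
  have hnull : ∀ p : ℂ, μ {p} = 0 := by
    intro p
    rw [hμ, withDensity_apply _ (measurableSet_singleton p),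
      Measure.restrict_eq_zero.2 (measure_singleton p), lintegral_zero_measure]
  -- ball bound for the restricted measure
  have hball : ∀ (z : ℂ) (r : ℝ), 0 < r →
      (μ.restrict (QR R)ᶜ) (Metric.ball z r) ≤ ENNReal.ofReal (η * Real.pi * r ^ 2) := by
    intro z r hr
    rw [Measure.restrict_apply measurableSet_ball, hμ,
      withDensity_apply _ (measurableSet_ball.inter hSm)]
    have hstep : ∫⁻ ζ in Metric.ball z r ∩ (QR R)ᶜ, ENNReal.ofReal (a ζ)
        ≤ ∫⁻ _ζ in Metric.ball z r ∩ (QR R)ᶜ, ENNReal.ofReal η := by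
      refine setLIntegral_mono' (measurableSet_ball.inter hSm) ?_
      intro ζ hζ
      refine ENNReal.ofReal_le_ofReal (haη ζ ?_)
      have := hSR ζ hζ.2
      linarith
    refine le_trans hstep ?_
    rw [setLIntegral_const]
    calc ENNReal.ofReal η * volume (Metric.ball z r ∩ (QR R)ᶜ)
        ≤ ENNReal.ofReal η * volume (Metric.ball z r) :=
          mul_le_mul_right (measure_mono inter_subset_left) _
      _ = ENNReal.ofReal η * (ENNReal.ofReal r ^ 2 * NNReal.pi) := by
          rw [Complex.volume_ball]
      _ = ENNReal.ofReal (η * Real.pi * r ^ 2) := by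
          rw [(show ((NNReal.pi : ℝ≥0∞)) = ENNReal.ofReal Real.pi by
            rw [← NNReal.coe_real_pi, ENNReal.ofReal_coe_nnreal]),
            ← ENNReal.ofReal_pow hr.le, ← ENNReal.ofReal_mul (by positivity : (0:ℝ) ≤ r ^ 2),
            ← ENNReal.ofReal_mul (by positivity : (0:ℝ) ≤ η)]
          ring_nf
  have hπ : (0:ℝ) ≤ η * Real.pi := by positivity
  have hnegL : ∀ z : ℂ,
      ∫⁻ ζ in (QR R)ᶜ, ENNReal.ofReal (max (-Real.log (‖ζ - z‖)) 0) ∂μ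
        ≤ ENNReal.ofReal (η * Real.pi * (1 / 2)) := fun z =>
    layercake_log_bound (μ.restrict (QR R)ᶜ) z (η * Real.pi) hπ (hball z)
  -- measurability of the log-distance functions
  have hlogmeas : ∀ z : ℂ, Measurable fun ζ : ℂ => Real.log (‖ζ - z‖) :=
    fun z => Real.measurable_log.comp
      (continuous_norm.measurable.comp (measurable_id.sub_const z))
  -- pointwise upper bound
  have hkey : ∀ (z : ℂ), ∀ ζ ∈ (QR R)ᶜ, Real.log (‖ζ - z‖)
      ≤ Real.log (‖ζ‖) + Real.log (1 + ‖z‖ / R) := by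
    intro z ζ hζ
    have hc0 : (0:ℝ) ≤ Real.log (1 + ‖z‖ / R) :=
      Real.log_nonneg (le_add_of_nonneg_right (by positivity))
    rcases eq_or_ne (ζ - z) 0 with h0 | h0
    · rw [h0, norm_zero, Real.log_zero]
      have := hSlog ζ hζ
      linarith
    · have h1 : 0 < ‖ζ - z‖ := norm_pos_iff.2 h0
      have hζpos : (0:ℝ) < ‖ζ‖ := by have := hSR ζ hζ; linarith
      have h2 : ‖ζ - z‖ ≤ ‖ζ‖ * (1 + ‖z‖ / R) := by
        have htri : ‖ζ - z‖ ≤ ‖ζ‖ + ‖z‖ := by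
          have := norm_add_le ζ (-z)
          simpa [sub_eq_add_neg] using this
        have hzz : ‖z‖ ≤ ‖ζ‖ * ‖z‖ / R := by
          rw [le_div_iff₀ hR0]
          nlinarith [norm_nonneg z, hSR ζ hζ]
        have : ‖ζ‖ * (1 + ‖z‖ / R)
            = ‖ζ‖ + ‖ζ‖ * ‖z‖ / R := by ring
        linarith
      calc Real.log (‖ζ - z‖) ≤ Real.log (‖ζ‖ * (1 + ‖z‖ / R)) :=
            logMono h1 h2
        _ = Real.log (‖ζ‖) + Real.log (1 + ‖z‖ / R) :=
            Real.log_mul (ne_of_gt hζpos) (by positivity)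
  -- integrability of ζ ↦ log |ζ - z| on S
  have hInt : ∀ z : ℂ, IntegrableOn (fun ζ => Real.log (‖ζ - z‖)) (QR R)ᶜ μ := by
    intro z
    have hc0 : (0:ℝ) ≤ Real.log (1 + ‖z‖ / R) :=
      Real.log_nonneg (le_add_of_nonneg_right (by positivity))
    constructor
    · exact (hlogmeas z).aestronglyMeasurable
    · rw [hasFiniteIntegral_iff_norm]
      have hb1 : ∀ ζ ∈ (QR R)ᶜ, ENNReal.ofReal ‖Real.log (‖ζ - z‖)‖
          ≤ ENNReal.ofReal (Real.log (‖ζ‖) + Real.log (1 + ‖z‖ / R))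
            + ENNReal.ofReal (max (-Real.log (‖ζ - z‖)) 0) := by
        intro ζ hζ
        rw [← ENNReal.ofReal_add (by have := hSlog ζ hζ; linarith) (le_max_right _ _),
          Real.norm_eq_abs]
        refine ENNReal.ofReal_le_ofReal ?_
        rcases le_or_gt 0 (Real.log (‖ζ - z‖)) with h | h
        · rw [abs_of_nonneg h]
          have h1 := hkey z ζ hζ
          have h2 := le_max_right (-Real.log (‖ζ - z‖)) (0:ℝ)
          linarith
        · rw [abs_of_neg h]
          have h1 := le_max_left (-Real.log (‖ζ - z‖)) (0:ℝ)
          have h2 := hSlog ζ hζ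
          linarith
      have hgint : IntegrableOn
          (fun ζ : ℂ => Real.log (‖ζ‖) + Real.log (1 + ‖z‖ / R))
          (QR R)ᶜ μ := hIint.add (hconstInt _)
      have hA1 : ∫⁻ ζ in (QR R)ᶜ,
          ENNReal.ofReal (Real.log (‖ζ‖) + Real.log (1 + ‖z‖ / R)) ∂μ
            < ⊤ := by
        refine lt_of_le_of_lt (lintegral_mono fun ζ => ?_) hgint.2
        rw [Real.enorm_eq_ofReal_abs]
        exact ENNReal.ofReal_le_ofReal (le_abs_self _)
      have hA2 : (∫⁻ ζ in (QR R)ᶜ,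
          ENNReal.ofReal (max (-Real.log (‖ζ - z‖)) 0) ∂μ) < ⊤ :=
        lt_of_le_of_lt (hnegL z) ENNReal.ofReal_lt_top
      have hmeas1 : Measurable fun ζ : ℂ =>
          ENNReal.ofReal (Real.log (‖ζ‖) + Real.log (1 + ‖z‖ / R)) :=
        ENNReal.measurable_ofReal.comp
          ((Real.measurable_log.comp continuous_norm.measurable).add_const _)
      calc ∫⁻ ζ in (QR R)ᶜ, ENNReal.ofReal ‖Real.log (‖ζ - z‖)‖ ∂μ
          ≤ ∫⁻ ζ in (QR R)ᶜ,
              (ENNReal.ofReal (Real.log (‖ζ‖) + Real.log (1 + ‖z‖ / R))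
                + ENNReal.ofReal (max (-Real.log (‖ζ - z‖)) 0)) ∂μ :=
            setLIntegral_mono' hSm hb1
        _ = (∫⁻ ζ in (QR R)ᶜ,
              ENNReal.ofReal (Real.log (‖ζ‖) + Real.log (1 + ‖z‖ / R)) ∂μ)
            + ∫⁻ ζ in (QR R)ᶜ,
              ENNReal.ofReal (max (-Real.log (‖ζ - z‖)) 0) ∂μ :=
            lintegral_add_left hmeas1 _
        _ < ⊤ := ENNReal.add_lt_top.2 ⟨hA1, hA2⟩
  -- negative part: integrability and integral bound
  have hnegint : ∀ z : ℂ, IntegrableOn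
      (fun ζ : ℂ => max (-Real.log (‖ζ - z‖)) 0) (QR R)ᶜ μ := fun z =>
    (hInt z).neg.pos_part
  have hneg0 : ∀ z : ℂ, 0 ≤ ∫ ζ in (QR R)ᶜ, max (-Real.log (‖ζ - z‖)) 0 ∂μ :=
    fun z => integral_nonneg fun ζ => le_max_right _ _
  have hnegR : ∀ z : ℂ,
      (∫ ζ in (QR R)ᶜ, max (-Real.log (‖ζ - z‖)) 0 ∂μ) ≤ 2 * η := by
    intro z
    have hms : AEStronglyMeasurable (fun ζ : ℂ => max (-Real.log (‖ζ - z‖)) 0)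
        (μ.restrict (QR R)ᶜ) := (((hlogmeas z).neg).max measurable_const).aestronglyMeasurable
    have heq := integral_eq_lintegral_of_nonneg_ae
      (f := fun ζ : ℂ => max (-Real.log (‖ζ - z‖)) 0)
      (μ := μ.restrict (QR R)ᶜ) (ae_of_all _ fun ζ => le_max_right _ _) hms
    rw [heq]
    have h1 := ENNReal.toReal_mono (by exact ENNReal.ofReal_ne_top) (hnegL z)
    rw [ENNReal.toReal_ofReal (by positivity)] at h1
    refine le_trans h1 ?_
    nlinarith [Real.pi_le_four, hη.le]
  -- upper bound for J z
  have hJub : ∀ z : ℂ, (∫ ζ in (QR R)ᶜ, Real.log (‖ζ - z‖) ∂μ)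
      ≤ (∫ ζ in (QR R)ᶜ, Real.log (‖ζ‖) ∂μ)
        + (M:ℝ)⁻¹ * Real.log (1 + ‖z‖ / R) := by
    intro z
    have h := setIntegral_mono_on (hInt z) (hIint.add (hconstInt _)) hSm (hkey z)
    simp only [Pi.add_apply] at h
    rwa [integral_add hIint (hconstInt _), setIntegral_const, smul_eq_mul, measureReal_def, hm] at h
  -- crude lower bound for J z
  have hJlb : ∀ z : ℂ, -(2 * η) ≤ ∫ ζ in (QR R)ᶜ, Real.log (‖ζ - z‖) ∂μ := by
    intro z
    have h := setIntegral_mono_on ((hnegint z).neg) (hInt z) hSm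
      (fun ζ _ => by
        have := le_max_left (-Real.log (‖ζ - z‖)) (0:ℝ)
        simp only [Pi.neg_apply]
        linarith)
    simp only [Pi.neg_apply] at h
    rw [integral_neg] at h
    have := hnegR z
    linarith
  -- refined lower bound for J z
  have hJlb2 : ∀ z : ℂ, 0 < ‖z‖ →
      (M:ℝ)⁻¹ * Real.log (‖z‖ / 2)
        - (∫ ζ in (QR R)ᶜ, Real.log (‖ζ‖) ∂μ) - 2 * η
      ≤ ∫ ζ in (QR R)ᶜ, Real.log (‖ζ - z‖) ∂μ := by
    intro z hz
    have hhalf : (0:ℝ) < ‖z‖ / 2 := by linarith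
    set T : Set ℂ := {ζ : ℂ | ‖z‖ / 2 ≤ ‖ζ - z‖} with hT
    have hTm : MeasurableSet T :=
      measurableSet_le measurable_const
        (continuous_norm.measurable.comp (measurable_id.sub_const z))
    have h_ind_int : IntegrableOn (T.indicator fun _ => Real.log (‖z‖ / 2))
        (QR R)ᶜ μ := (hconstInt _).indicator hTm
    have hle : ∀ ζ ∈ (QR R)ᶜ,
        T.indicator (fun _ => Real.log (‖z‖ / 2)) ζ
          - max (-Real.log (‖ζ - z‖)) 0 ≤ Real.log (‖ζ - z‖) := by
      intro ζ _hζ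
      by_cases hζT : ζ ∈ T
      · rw [Set.indicator_of_mem hζT]
        have h1 : Real.log (‖z‖ / 2) ≤ Real.log (‖ζ - z‖) :=
          logMono hhalf hζT
        have h2 := le_max_right (-Real.log (‖ζ - z‖)) (0:ℝ)
        linarith
      · rw [Set.indicator_of_notMem hζT]
        have h1 := le_max_left (-Real.log (‖ζ - z‖)) (0:ℝ)
        linarith
    have step1 := setIntegral_mono_on (h_ind_int.sub (hnegint z)) (hInt z) hSm hle
    simp only [Pi.sub_apply] at step1
    rw [integral_sub h_ind_int (hnegint z), setIntegral_indicator hTm, setIntegral_const,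
      smul_eq_mul, measureReal_def] at step1
    -- measure arithmetic
    have hfin1 : μ ((QR R)ᶜ ∩ T) ≠ ⊤ :=
      (lt_of_le_of_lt (measure_mono inter_subset_left) hμfin').ne
    have hfin2 : μ ((QR R)ᶜ \ T) ≠ ⊤ :=
      (lt_of_le_of_lt (measure_mono diff_subset) hμfin').ne
    have hxy : (μ ((QR R)ᶜ ∩ T)).toReal + (μ ((QR R)ᶜ \ T)).toReal = (M:ℝ)⁻¹ := by
      rw [← ENNReal.toReal_add hfin1 hfin2, measure_inter_add_diff _ hTm, hm]
    have hylog : (μ ((QR R)ᶜ \ T)).toReal * Real.log (‖z‖ / 2)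
        ≤ ∫ ζ in (QR R)ᶜ, Real.log (‖ζ‖) ∂μ := by
      rcases le_or_gt (Real.log (‖z‖ / 2)) 0 with h | h
      · have h0 : (0:ℝ) ≤ (μ ((QR R)ᶜ \ T)).toReal := ENNReal.toReal_nonneg
        nlinarith
      · have heq : (μ ((QR R)ᶜ \ T)).toReal * Real.log (‖z‖ / 2)
            = ∫ _ζ in (QR R)ᶜ \ T, Real.log (‖z‖ / 2) ∂μ := by
          rw [setIntegral_const, smul_eq_mul, measureReal_def]
        rw [heq]
        have hmono : ∀ ζ ∈ (QR R)ᶜ \ T, Real.log (‖z‖ / 2)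
            ≤ Real.log (‖ζ‖) := by
          intro ζ hζ
          have hnT : ¬ (‖z‖ / 2 ≤ ‖ζ - z‖) := hζ.2
          push_neg at hnT
          have htri : ‖z‖ ≤ ‖ζ‖ + ‖ζ - z‖ := by
            have h1 := norm_add_le (z - ζ) ζ
            have h1' : ‖z‖ ≤ ‖z - ζ‖ + ‖ζ‖ := by
              simpa using h1
            have h2 : ‖z - ζ‖ = ‖ζ - z‖ :=
              norm_sub_rev z ζ
            linarith
          exact logMono hhalf (by linarith)
        calc (∫ _ζ in (QR R)ᶜ \ T, Real.log (‖z‖ / 2) ∂μ)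
            ≤ ∫ ζ in (QR R)ᶜ \ T, Real.log (‖ζ‖) ∂μ :=
              setIntegral_mono_on
                (integrableOn_const
                  (lt_of_le_of_lt (measure_mono diff_subset) hμfin').ne)
                (hIint.mono_set diff_subset)
                (hSm.diff hTm) hmono
          _ ≤ ∫ ζ in (QR R)ᶜ, Real.log (‖ζ‖) ∂μ :=
              setIntegral_mono_set hIint
                ((ae_restrict_iff' hSm).2 (ae_of_all _ hSlog))
                (HasSubset.Subset.eventuallyLE diff_subset)
    have hx : (μ ((QR R)ᶜ ∩ T)).toReal * Real.log (‖z‖ / 2)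
        = (M:ℝ)⁻¹ * Real.log (‖z‖ / 2)
          - (μ ((QR R)ᶜ \ T)).toReal * Real.log (‖z‖ / 2) := by
      rw [← hxy]; ring
    have hnR := hnegR z
    linarith [step1, hx, hylog, hnR]
  -- identity V(z) = J(z) - I
  have hVJ : ∀ z : ℂ, Vinf z = (∫ ζ in (QR R)ᶜ, Real.log (‖ζ - z‖) ∂μ)
      - ∫ ζ in (QR R)ᶜ, Real.log (‖ζ‖) ∂μ := by
    intro z
    rw [hV z, ← integral_sub (hInt z) hIint]
    apply integral_congr_ae
    have h0 : μ ({0, z} : Set ℂ) = 0 := by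
      have : μ ({0, z} : Set ℂ) ≤ μ {(0:ℂ)} + μ {z} := by
        rw [Set.insert_eq]
        exact measure_union_le _ _
      simpa [hnull 0, hnull z] using this
    have hres : (μ.restrict (QR R)ᶜ) ({0, z} : Set ℂ) = 0 :=
      le_antisymm (le_trans (Measure.restrict_le_self _) h0.le) zero_le
    have hae : ∀ᵐ ζ ∂(μ.restrict (QR R)ᶜ), ζ ∉ ({0, z} : Set ℂ) := by
      rw [ae_iff]
      simpa only [not_not, Set.setOf_mem_eq] using hres
    filter_upwards [hae] with ζ hζ
    simp only [Set.mem_insert_iff, Set.mem_singleton_iff, not_or] at hζ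
    obtain ⟨hζ0, hζz⟩ := hζ
    have h1 : (1 : ℂ) - z / ζ = (ζ - z) / ζ := by field_simp
    rw [h1, norm_div, Real.log_div (norm_ne_zero_iff.2 (sub_ne_zero.2 hζz))
      (norm_ne_zero_iff.2 hζ0)]
  -- facts about winf
  have hrpos : 0 < rinf := by rw [hr]; exact Real.exp_pos _
  have hIR : Real.log R ≤ (M:ℝ) * ∫ ζ in (QR R)ᶜ, Real.log (‖ζ‖) ∂μ := by
    have h := mul_le_mul_of_nonneg_left hIlb (by positivity : (0:ℝ) ≤ (M:ℝ))
    calc Real.log R = (M:ℝ) * (M:ℝ)⁻¹ * Real.log R := by rw [hMm]; ring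
      _ = (M:ℝ) * ((M:ℝ)⁻¹ * Real.log R) := by ring
      _ ≤ (M:ℝ) * ∫ ζ in (QR R)ᶜ, Real.log (‖ζ‖) ∂μ := h
  have hrR : R ≤ rinf := by
    rw [hr]
    calc R = Real.exp (Real.log R) := (Real.exp_log hR0).symm
      _ ≤ Real.exp ((M:ℝ) * ∫ ζ in (QR R)ᶜ, Real.log (‖ζ‖) ∂μ) :=
        Real.exp_le_exp.2 hIR
  have hw60 : (60:ℝ) ≤ ‖winf‖ := by rw [hw]; linarith
  have hwpos : (0:ℝ) < ‖winf‖ := by linarith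
  have hwne : winf ≠ 0 := by
    intro h
    rw [h, norm_zero] at hwpos
    exact lt_irrefl _ hwpos
  have hlogw : Real.log (‖winf‖)
      = Real.log 10 + (M:ℝ) * ∫ ζ in (QR R)ᶜ, Real.log (‖ζ‖) ∂μ := by
    rw [hw, hr, Real.log_mul (by norm_num) (Real.exp_ne_zero _), Real.log_exp]
  have hmlogw : (M:ℝ)⁻¹ * Real.log (‖winf‖)
      = (M:ℝ)⁻¹ * Real.log 10 + ∫ ζ in (QR R)ᶜ, Real.log (‖ζ‖) ∂μ := by
    rw [hlogw]
    have : (M:ℝ)⁻¹ * ((M:ℝ) * ∫ ζ in (QR R)ᶜ, Real.log (‖ζ‖) ∂μ)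
        = ((M:ℝ) * (M:ℝ)⁻¹) * ∫ ζ in (QR R)ᶜ, Real.log (‖ζ‖) ∂μ := by ring
    rw [mul_add, this, hMm, one_mul]
  -- numeric log bounds
  have hlog10ub : Real.log 10 ≤ 9 := by
    have := Real.log_le_sub_one_of_pos (by norm_num : (0:ℝ) < 10); linarith
  have hlog10lb : (0:ℝ) ≤ Real.log 10 := Real.log_nonneg (by norm_num)
  have hlog4ub : Real.log 4 ≤ 3 := by
    have := Real.log_le_sub_one_of_pos (by norm_num : (0:ℝ) < 4); linarith
  have hlog3ub : Real.log 3 ≤ 2 := by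
    have := Real.log_le_sub_one_of_pos (by norm_num : (0:ℝ) < 3); linarith
  have hlog3lb : (0:ℝ) ≤ Real.log 3 := Real.log_nonneg (by norm_num)
  -- products with m
  have hm10 : (M:ℝ)⁻¹ * Real.log 10 ≤ 9 * η := by
    have t1 : (M:ℝ)⁻¹ * Real.log 10 ≤ η * Real.log 10 :=
      mul_le_mul_of_nonneg_right hMη.le hlog10lb
    have t2 : η * Real.log 10 ≤ η * 9 := mul_le_mul_of_nonneg_left hlog10ub hη.le
    linarith
  have hm10' : (0:ℝ) ≤ (M:ℝ)⁻¹ * Real.log 10 := by positivity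
  have hm4 : (M:ℝ)⁻¹ * Real.log 4 ≤ 3 * η := by
    have h4 : (0:ℝ) ≤ Real.log 4 := Real.log_nonneg (by norm_num)
    have t1 : (M:ℝ)⁻¹ * Real.log 4 ≤ η * Real.log 4 :=
      mul_le_mul_of_nonneg_right hMη.le h4
    have t2 : η * Real.log 4 ≤ η * 3 := mul_le_mul_of_nonneg_left hlog4ub hη.le
    linarith
  have hm3 : (M:ℝ)⁻¹ * Real.log 3 ≤ 2 * η := by
    have t1 : (M:ℝ)⁻¹ * Real.log 3 ≤ η * Real.log 3 :=
      mul_le_mul_of_nonneg_right hMη.le hlog3lb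
    have t2 : η * Real.log 3 ≤ η * 2 := mul_le_mul_of_nonneg_left hlog3ub hη.le
    linarith
  constructor
  · -- Part 1: estimate away from the disc
    intro z hz
    simp only [Set.mem_setOf_eq, not_lt] at hz
    have hT3 : (3:ℝ) ≤ ‖z - winf‖ := by linarith
    have hTpos : (0:ℝ) < ‖z - winf‖ := by linarith
    have hsubne : z - winf ≠ 0 := norm_ne_zero_iff.1 (ne_of_gt hTpos)
    have habs1 : ‖1 - z / winf‖
        = ‖z - winf‖ / ‖winf‖ := by
      rw [show (1:ℂ) - z / winf = (winf - z) / winf from by field_simp, norm_div,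
        norm_sub_rev winf z]
    have hlog1 : Real.log (‖1 - z / winf‖)
        = Real.log (‖z - winf‖) - Real.log (‖winf‖) := by
      rw [habs1, Real.log_div (ne_of_gt hTpos) (ne_of_gt hwpos)]
    have htri : ‖z‖ ≤ ‖z - winf‖ + ‖winf‖ := by
      have h1 := norm_add_le (z - winf) winf
      simpa using h1
    have hzb : ‖z‖ ≤ 21 * ‖z - winf‖ := by linarith
    have hlogTz0 : (0:ℝ) ≤ Real.log (‖z - winf‖) :=
      Real.log_nonneg (by linarith)
    have hc4 : Real.log (1 + ‖z‖ / R)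
        ≤ Real.log 4 + Real.log (‖z - winf‖) := by
      have hdiv : ‖z‖ / R ≤ 21 * ‖z - winf‖ / 6 :=
        div_le_div₀ (by positivity) hzb (by norm_num) hR
      have harg : 1 + ‖z‖ / R ≤ 4 * ‖z - winf‖ := by linarith
      calc Real.log (1 + ‖z‖ / R)
          ≤ Real.log (4 * ‖z - winf‖) := logMono (by positivity) harg
        _ = Real.log 4 + Real.log (‖z - winf‖) :=
            Real.log_mul (by norm_num) (ne_of_gt hTpos)
    have hmc : (M:ℝ)⁻¹ * Real.log (1 + ‖z‖ / R)
        ≤ (M:ℝ)⁻¹ * Real.log 4 + (M:ℝ)⁻¹ * Real.log (‖z - winf‖) := by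
      have t := mul_le_mul_of_nonneg_left hc4 hm_pos.le
      rw [mul_add] at t
      exact t
    have hsplit : (M:ℝ)⁻¹ * (Real.log (‖z - winf‖) - Real.log (‖winf‖))
        = (M:ℝ)⁻¹ * Real.log (‖z - winf‖)
          - ((M:ℝ)⁻¹ * Real.log 10 + ∫ ζ in (QR R)ᶜ, Real.log (‖ζ‖) ∂μ) := by
      rw [mul_sub, hmlogw]
    rw [hVJ z, hlog1, abs_le]
    constructor
    · -- lower bound
      rcases le_or_gt (‖z‖) (2 * ‖winf‖) with hcase | hcase
      · have hTub : ‖z - winf‖ ≤ 3 * ‖winf‖ := by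
          have h1 : ‖z - winf‖ ≤ ‖z‖ + ‖winf‖ := by
            have := norm_add_le z (-winf)
            simpa [sub_eq_add_neg] using this
          linarith
        have hlogT : Real.log (‖z - winf‖)
            ≤ Real.log 3 + Real.log (‖winf‖) := by
          calc Real.log (‖z - winf‖)
              ≤ Real.log (3 * ‖winf‖) := logMono hTpos hTub
            _ = Real.log 3 + Real.log (‖winf‖) :=
                Real.log_mul (by norm_num) (ne_of_gt hwpos)
        have hmT : (M:ℝ)⁻¹ * Real.log (‖z - winf‖)
            ≤ (M:ℝ)⁻¹ * Real.log 3 + (M:ℝ)⁻¹ * Real.log (‖winf‖) := by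
          have t := mul_le_mul_of_nonneg_left hlogT hm_pos.le
          rw [mul_add] at t
          exact t
        have hJz := hJlb z
        linarith [hsplit, hmT, hmlogw, hm3, hm10, hm10', hIη, hη]
      · have hzpos : (0:ℝ) < ‖z‖ := by linarith
        have hJ2 := hJlb2 z hzpos
        have hTub2 : ‖z - winf‖ ≤ (3/2) * ‖z‖ := by
          have h1 : ‖z - winf‖ ≤ ‖z‖ + ‖winf‖ := by
            have := norm_add_le z (-winf)
            simpa [sub_eq_add_neg] using this
          linarith
        have hlogT2 : Real.log (‖z - winf‖)
            ≤ Real.log 3 - Real.log 2 + Real.log (‖z‖) := by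
          calc Real.log (‖z - winf‖)
              ≤ Real.log ((3/2) * ‖z‖) := logMono hTpos hTub2
            _ = Real.log (3/2) + Real.log (‖z‖) :=
                Real.log_mul (by norm_num) (ne_of_gt hzpos)
            _ = Real.log 3 - Real.log 2 + Real.log (‖z‖) := by
                rw [Real.log_div (by norm_num) (by norm_num)]
        have hmT2 : (M:ℝ)⁻¹ * Real.log (‖z - winf‖)
            ≤ (M:ℝ)⁻¹ * Real.log 3 - (M:ℝ)⁻¹ * Real.log 2
              + (M:ℝ)⁻¹ * Real.log (‖z‖) := by
          have t := mul_le_mul_of_nonneg_left hlogT2 hm_pos.le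
          rw [mul_add, mul_sub] at t
          exact t
        have hhalfeq : (M:ℝ)⁻¹ * Real.log (‖z‖ / 2)
            = (M:ℝ)⁻¹ * Real.log (‖z‖) - (M:ℝ)⁻¹ * Real.log 2 := by
          rw [Real.log_div (ne_of_gt hzpos) (by norm_num), mul_sub]
        linarith [hsplit, hmT2, hhalfeq, hm3, hm10', hIη, hη]
    · -- upper bound
      have hJz := hJub z
      linarith [hsplit, hmc, hm4, hm10, hIη, hη, hlogTz0]
  · -- Part 2: inside the disc
    intro z hz
    simp only [Set.mem_setOf_eq] at hz
    rw [show (((M:ℝ) : EReal))⁻¹ = (((M:ℝ)⁻¹ : ℝ) : EReal) from (EReal.coe_inv _).symm]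
    by_cases hzw : z = winf
    · subst hzw
      have h0 : (1:ℂ) - z / z = 0 := by rw [div_self hwne, sub_self]
      rw [h0, show elog 0 = ⊥ from by simp [elog],
        EReal.coe_mul_bot_of_pos (by exact_mod_cast hm_pos)]
      exact bot_le
    · have hsubne : z - winf ≠ 0 := sub_ne_zero.2 hzw
      have hTpos : 0 < ‖z - winf‖ := norm_pos_iff.2 hsubne
      have hne : (1:ℂ) - z / winf ≠ 0 := by
        rw [show (1:ℂ) - z / winf = (winf - z) / winf from by field_simp]
        exact div_ne_zero (sub_ne_zero.2 (Ne.symm hzw)) hwne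
      rw [elog, if_neg hne, ← EReal.coe_mul, EReal.coe_le_coe_iff]
      have habs1 : ‖1 - z / winf‖
          = ‖z - winf‖ / ‖winf‖ := by
        rw [show (1:ℂ) - z / winf = (winf - z) / winf from by field_simp, norm_div,
          norm_sub_rev winf z]
      have hlt : ‖1 - z / winf‖ < 1 := by
        rw [habs1, div_lt_one hwpos]
        linarith
      have hpos : 0 < ‖1 - z / winf‖ := by
        rw [habs1]
        positivity
      have hlogneg : Real.log (‖1 - z / winf‖) < 0 := Real.log_neg hpos hlt
      have hLHS : (M:ℝ)⁻¹ * Real.log (‖1 - z / winf‖) ≤ 0 :=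
        (mul_neg_of_pos_of_neg hm_pos hlogneg).le
      have hVlb : -(3 * η) ≤ Vinf z := by
        rw [hVJ z]
        have := hJlb z
        linarith
      linarith
end
end

section
/- Let K ⊆ ℂ² be a regular, circled, polynomially convex compact set. Then the topological boundary of K equals {(z,w) ∈ ℂ² : ρ_K(z,w) = 0}. -/
open MeasureTheory Filter Topology

noncomputable section

/-- Evaluation of a polynomial in two complex variables at a point of `ℂ × ℂ`. -/
def evalPt (p : MvPolynomial (Fin 2) ℂ) (z : ℂ × ℂ) : ℂ :=
  MvPolynomial.eval ![z.1, z.2] p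

/-- The set of competitors `(1/deg p) log |p(z)|` in the definition of the extremal
function of `K`. -/
def candSet (K : Set (ℂ × ℂ)) (z : ℂ × ℂ) : Set ℝ :=
  {v | ∃ p : MvPolynomial (Fin 2) ℂ, 1 ≤ p.totalDegree ∧
      (∀ x ∈ K, ‖evalPt p x‖ ≤ 1) ∧
      v = (p.totalDegree : ℝ)⁻¹ * Real.log (‖evalPt p z‖)}

/-- The (pluricomplex) extremal function `V_K`. -/
def VK (K : Set (ℂ × ℂ)) (z : ℂ × ℂ) : ℝ :=
  max 0 (sSup (candSet K z))

/-- `K` is regular: `V_K` is finite and continuous. -/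
def Regular (K : Set (ℂ × ℂ)) : Prop :=
  (∀ z, BddAbove (candSet K z)) ∧ Continuous (VK K)

/-- `K` is circled. -/
def Circled (K : Set (ℂ × ℂ)) : Prop :=
  ∀ z ∈ K, ∀ t : ℝ,
    (Complex.exp (t * Complex.I) * z.1, Complex.exp (t * Complex.I) * z.2) ∈ K

/-- `K` is polynomially convex. -/
def PolyConvex (K : Set (ℂ × ℂ)) : Prop :=
  K = {z | ∀ p : MvPolynomial (Fin 2) ℂ,
        ‖evalPt p z‖ ≤ sSup ((fun x => ‖evalPt p x‖) '' K)}

/-- The Robin function of `K`, with values in `[-∞, ∞)` (here `EReal`). -/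
def robin (K : Set (ℂ × ℂ)) (z : ℂ × ℂ) : EReal :=
  Filter.limsup
    (fun l : ℂ => ((VK K (l * z.1, l * z.2) - Real.log (‖l‖) : ℝ) : EReal))
    (Filter.comap (fun l : ℂ => ‖l‖) Filter.atTop)

/-!
Rotating a point of a circled set `K` by `N`-th roots of unity and averaging shows that every
homogeneous component of a polynomial `p` is bounded on `K` by `sup_K |p|`. So only homogeneous
polynomials matter: with `Φ_K(z) = sup |q(z)|^(1/deg q)` over homogeneous `q` with `|q| ≤ 1` on
`K`, one gets `|p(z)| ≤ (deg p + 1) ‖p‖_K max(1, Φ_K(z))^(deg p)`, and applying this to `p^n`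
removes the factor `deg p + 1`. Hence `V_K = log⁺ Φ_K`, and since `Φ_K(λz) = |λ| Φ_K(z)` the
Robin function is `log Φ_K`. Polynomial convexity gives `K = {Φ_K ≤ 1}`, continuity of `V_K`
makes `{Φ_K < 1}` open, so it is the interior of `K`, and `∂K = {Φ_K = 1} = {ρ_K = 0}`.
-/

open MvPolynomial Finset
open scoped Pointwise

theorem le_of_forall_pow_le_mul_pow {a M c : ℝ} (hM : 0 ≤ M)
    (h : ∀ n : ℕ, a ^ n ≤ (c * n + 1) * M ^ n) : a ≤ M := by
  by_contra! hMa
  have ha : 0 < a := hM.trans_lt hMa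
  have hr0 : 0 ≤ M / a := div_nonneg hM ha.le
  have hr1 : M / a < 1 := (div_lt_one ha).2 hMa
  have hlim : Tendsto (fun n : ℕ => (c * n + 1) * (M / a) ^ n) atTop (𝓝 0) := by
    simpa [add_mul, mul_assoc] using
      ((tendsto_self_mul_const_pow_of_lt_one hr0 hr1).const_mul c).add
        (tendsto_pow_atTop_nhds_zero_of_lt_one hr0 hr1)
  obtain ⟨n, hn⟩ := (hlim.eventually (gt_mem_nhds one_pos)).exists
  rw [div_pow, ← mul_div_assoc, div_lt_one (pow_pos ha n)] at hn
  linarith [h n]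

theorem norm_le_of_forall_norm_sum_mul_pow_le {a : ℕ → ℂ} {N j : ℕ} (hj : j < N) {M : ℝ}
    (h : ∀ u : ℂ, ‖u‖ = 1 → ‖∑ m ∈ range N, a m * u ^ m‖ ≤ M) : ‖a j‖ ≤ M := by
  have hN : 0 < N := by omega
  set ω : ℂ := Complex.exp (2 * Real.pi * Complex.I / N)
  have hω : IsPrimitiveRoot ω N := Complex.isPrimitiveRoot_exp N hN.ne'
  have hω0 : ω ≠ 0 := Complex.exp_ne_zero _
  have hnorm : ∀ k : ℕ, ‖ω ^ k‖ = 1 := fun k => by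
    rw [norm_pow, hω.norm'_eq_one hN.ne', one_pow]
  -- averaging `(∑ m, a m * u ^ m) * u⁻¹ ^ j` over the `N`-th roots of unity `u` leaves `a j`
  have horth : ∀ m ∈ range N,
      ∑ k ∈ range N, (ω ^ k) ^ m * ((ω ^ k) ^ j)⁻¹ = if m = j then (N : ℂ) else 0 := by
    intro m hm
    have hpow : ∀ k : ℕ, (ω ^ k) ^ m * ((ω ^ k) ^ j)⁻¹ = (ω ^ ((m : ℤ) - j)) ^ k := by
      intro k
      rw [← zpow_natCast, ← zpow_natCast, ← zpow_natCast, ← zpow_natCast, ← zpow_neg,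
        ← zpow_mul, ← zpow_mul, ← zpow_mul, ← zpow_add₀ hω0]
      ring_nf
    simp_rw [hpow]
    split_ifs with hmj
    · simp [hmj]
    · have hne : ω ^ ((m : ℤ) - j) ≠ 1 := by
        rw [Ne, hω.zpow_eq_one_iff_dvd]
        intro hdvd
        have := Int.eq_zero_of_abs_lt_dvd hdvd (by rw [abs_lt]; simp at hm; omega)
        omega
      rw [geom_sum_eq hne, ← zpow_natCast, ← zpow_mul, mul_comm, zpow_mul, zpow_natCast,
        hω.pow_eq_one, one_zpow, sub_self, zero_div]
  have hcoeff : (N : ℂ) * a j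
      = ∑ k ∈ range N, (∑ m ∈ range N, a m * (ω ^ k) ^ m) * ((ω ^ k) ^ j)⁻¹ := by
    simp_rw [sum_mul, mul_assoc]
    rw [sum_comm]
    simp_rw [← mul_sum]
    rw [sum_congr rfl fun m hm => by rw [horth m hm]]
    simp [hj, mul_comm]
  have : (N : ℝ) * ‖a j‖ ≤ N * M := calc
    (N : ℝ) * ‖a j‖ = ‖(N : ℂ) * a j‖ := by simp
    _ ≤ ∑ k ∈ range N, ‖(∑ m ∈ range N, a m * (ω ^ k) ^ m) * ((ω ^ k) ^ j)⁻¹‖ := by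
      rw [hcoeff]; exact norm_sum_le _ _
    _ ≤ ∑ k ∈ range N, M := by
      gcongr with k
      rw [norm_mul, norm_inv, norm_pow, hnorm, one_pow, inv_one, mul_one]
      exact h _ (hnorm k)
    _ = N * M := by simp
  exact le_of_mul_le_mul_left this (by exact_mod_cast hN)

theorem MvPolynomial.IsHomogeneous.eval_smul {σ R : Type*} [CommSemiring R]
    {φ : MvPolynomial σ R} {m : ℕ} (hφ : φ.IsHomogeneous m) (c : R) (x : σ → R) :
    eval (c • x) φ = c ^ m * eval x φ := by
  rw [eval_eq, eval_eq, mul_sum]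
  refine sum_congr rfl fun d hd => ?_
  have hdeg : d.degree = m := by
    by_contra h
    exact (mem_support_iff.mp hd) (hφ.coeff_eq_zero h)
  rw [← hdeg, Finsupp.degree_apply, ← prod_pow_eq_pow_sum, mul_left_comm, ← prod_mul_distrib]
  simp only [Pi.smul_apply, smul_eq_mul, mul_pow]

theorem MvPolynomial.sum_range_homogeneousComponent {σ R : Type*} [CommSemiring R]
    (φ : MvPolynomial σ R) {N : ℕ} (hN : φ.totalDegree < N) :
    ∑ m ∈ range N, homogeneousComponent m φ = φ := by
  rw [← sum_subset (range_subset_range.2 hN) fun m _ hm => homogeneousComponent_eq_zero m φ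
    (by simpa using hm), sum_homogeneousComponent]

theorem continuous_evalPt (p : MvPolynomial (Fin 2) ℂ) : Continuous (evalPt p) :=
  (continuous_eval p).comp (by fun_prop)

theorem norm_evalPt_C_mul (c : ℂ) (q : MvPolynomial (Fin 2) ℂ) (z : ℂ × ℂ) :
    ‖evalPt (C c * q) z‖ = ‖c‖ * ‖evalPt q z‖ := by
  simp [evalPt]

theorem evalPt_mul_of_isHomogeneous {q : MvPolynomial (Fin 2) ℂ} {m : ℕ}
    (hq : q.IsHomogeneous m) (c : ℂ) (z : ℂ × ℂ) :
    evalPt q (c * z.1, c * z.2) = c ^ m * evalPt q z := by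
  rw [evalPt, evalPt, ← hq.eval_smul, Matrix.smul_cons, Matrix.smul_cons, Matrix.smul_empty]
  rfl

theorem evalPt_mul_eq_sum_homogeneousComponent (p : MvPolynomial (Fin 2) ℂ) {N : ℕ}
    (hN : p.totalDegree < N) (u : ℂ) (z : ℂ × ℂ) :
    evalPt p (u * z.1, u * z.2) = ∑ m ∈ range N, evalPt (homogeneousComponent m p) z * u ^ m := by
  conv_lhs => rw [← p.sum_range_homogeneousComponent hN]
  rw [evalPt, map_sum]
  exact sum_congr rfl fun m _ =>
    (evalPt_mul_of_isHomogeneous (homogeneousComponent_isHomogeneous m p) u z).trans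
      (mul_comm _ _)

def homCandSet (K : Set (ℂ × ℂ)) (z : ℂ × ℂ) : Set ℝ :=
  {r | ∃ (q : MvPolynomial (Fin 2) ℂ) (d : ℕ), d ≠ 0 ∧ q.IsHomogeneous d ∧
    (∀ x ∈ K, ‖evalPt q x‖ ≤ 1) ∧ r = ‖evalPt q z‖ ^ (d : ℝ)⁻¹}

/-- Siciak's homogeneous extremal function `Φ_K`. -/
def homExtremal (K : Set (ℂ × ℂ)) (z : ℂ × ℂ) : ℝ :=
  sSup (homCandSet K z)

theorem homExtremal_nonneg (K : Set (ℂ × ℂ)) (z : ℂ × ℂ) : 0 ≤ homExtremal K z :=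
  Real.sSup_nonneg fun _ ⟨_, _, _, _, _, hr⟩ => hr ▸ by positivity

theorem homCandSet_mul (K : Set (ℂ × ℂ)) (l : ℂ) (z : ℂ × ℂ) :
    homCandSet K (l * z.1, l * z.2) = ‖l‖ • homCandSet K z := by
  have hscale : ∀ {q : MvPolynomial (Fin 2) ℂ} {d : ℕ}, d ≠ 0 → q.IsHomogeneous d →
      ‖evalPt q (l * z.1, l * z.2)‖ ^ (d : ℝ)⁻¹ = ‖l‖ * ‖evalPt q z‖ ^ (d : ℝ)⁻¹ :=
    fun hd hq => by
      rw [evalPt_mul_of_isHomogeneous hq, norm_mul, norm_pow,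
        Real.mul_rpow (by positivity) (norm_nonneg _),
        Real.pow_rpow_inv_natCast (norm_nonneg _) hd]
  ext r
  simp only [homCandSet, Set.mem_smul_set, Set.mem_ofPred_eq, smul_eq_mul]
  constructor
  · rintro ⟨q, d, hd, hq, hqK, rfl⟩
    exact ⟨_, ⟨q, d, hd, hq, hqK, rfl⟩, (hscale hd hq).symm⟩
  · rintro ⟨_, ⟨q, d, hd, hq, hqK, rfl⟩, rfl⟩
    exact ⟨q, d, hd, hq, hqK, (hscale hd hq).symm⟩

theorem homExtremal_mul (K : Set (ℂ × ℂ)) (l : ℂ) (z : ℂ × ℂ) :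
    homExtremal K (l * z.1, l * z.2) = ‖l‖ * homExtremal K z := by
  rw [homExtremal, homCandSet_mul, Real.sSup_smul_of_nonneg (norm_nonneg l), smul_eq_mul,
    homExtremal]

section

variable {K : Set (ℂ × ℂ)}

theorem Circled.mul_mem (hcirc : Circled K) {x : ℂ × ℂ} (hx : x ∈ K) {u : ℂ}
    (hu : ‖u‖ = 1) : (u * x.1, u * x.2) ∈ K := by
  have hu' : Complex.exp (Complex.arg u * Complex.I) = u := by
    simpa [hu] using Complex.norm_mul_exp_arg_mul_I u
  simpa [hu'] using hcirc x hx (Complex.arg u)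

theorem Circled.norm_evalPt_homogeneousComponent_le (hcirc : Circled K)
    {p : MvPolynomial (Fin 2) ℂ} {M : ℝ} (hp : ∀ y ∈ K, ‖evalPt p y‖ ≤ M) (j : ℕ)
    {x : ℂ × ℂ} (hx : x ∈ K) : ‖evalPt (homogeneousComponent j p) x‖ ≤ M :=
  norm_le_of_forall_norm_sum_mul_pow_le (N := max p.totalDegree j + 1) (j := j)
    (by omega) fun u hu => by
    rw [← evalPt_mul_eq_sum_homogeneousComponent p (by omega)]
    exact hp _ (hcirc.mul_mem hx hu)

theorem norm_evalPt_le_mul_pow_of_isHomogeneous (hne : K.Nonempty) {z : ℂ × ℂ} {b : ℝ}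
    (hb : b ∈ upperBounds (homCandSet K z)) {q : MvPolynomial (Fin 2) ℂ} {d : ℕ}
    (hq : q.IsHomogeneous d) {M : ℝ} (hM : 0 < M) (hqK : ∀ x ∈ K, ‖evalPt q x‖ ≤ M) :
    ‖evalPt q z‖ ≤ M * b ^ d := by
  rcases eq_or_ne d 0 with rfl | hd
  · obtain ⟨x, hx⟩ := hne
    have hconst : ∀ y, evalPt q y = evalPt q (0, 0) := fun y => by
      simpa using (evalPt_mul_of_isHomogeneous hq 0 y).symm
    rw [pow_zero, mul_one, hconst, ← hconst x]
    exact hqK x hx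
  · have hnorm : ‖(M : ℂ)⁻¹‖ = M⁻¹ := by simp [hM.le]
    have hmem : ‖evalPt (C (M : ℂ)⁻¹ * q) z‖ ^ (d : ℝ)⁻¹ ∈ homCandSet K z := by
      refine ⟨_, d, hd, hq.C_mul _, fun x hx => ?_, rfl⟩
      rw [norm_evalPt_C_mul, hnorm, inv_mul_le_one₀ hM]
      exact hqK x hx
    have := calc
      M⁻¹ * ‖evalPt q z‖ = (‖evalPt (C (M : ℂ)⁻¹ * q) z‖ ^ (d : ℝ)⁻¹) ^ d := by
        rw [Real.rpow_inv_natCast_pow (norm_nonneg _) hd, norm_evalPt_C_mul, hnorm]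
      _ ≤ b ^ d := pow_le_pow_left₀ (by positivity) (hb hmem) d
    rwa [inv_mul_le_iff₀ hM] at this

theorem Circled.norm_evalPt_le_totalDegree_succ_mul (hcirc : Circled K) (hne : K.Nonempty)
    {z : ℂ × ℂ} {b : ℝ} (hb : b ∈ upperBounds (homCandSet K z)) (hb1 : 1 ≤ b)
    {p : MvPolynomial (Fin 2) ℂ} {M : ℝ} (hM : 0 < M) (hp : ∀ x ∈ K, ‖evalPt p x‖ ≤ M) :
    ‖evalPt p z‖ ≤ (p.totalDegree + 1) * (M * b ^ p.totalDegree) := by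
  conv_lhs => rw [← sum_homogeneousComponent p]
  calc ‖evalPt (∑ m ∈ range (p.totalDegree + 1), homogeneousComponent m p) z‖
      ≤ ∑ m ∈ range (p.totalDegree + 1), ‖evalPt (homogeneousComponent m p) z‖ := by
        rw [evalPt, map_sum]; exact norm_sum_le _ _
    _ ≤ ∑ m ∈ range (p.totalDegree + 1), M * b ^ p.totalDegree := by
        gcongr with m hm
        calc ‖evalPt (homogeneousComponent m p) z‖ ≤ M * b ^ m :=
              norm_evalPt_le_mul_pow_of_isHomogeneous hne hb
                (homogeneousComponent_isHomogeneous m p) hM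
                fun x hx => hcirc.norm_evalPt_homogeneousComponent_le hp m hx
          _ ≤ M * b ^ p.totalDegree := by
              gcongr
              exact Nat.lt_succ_iff.mp (mem_range.mp hm)
    _ = (p.totalDegree + 1) * (M * b ^ p.totalDegree) := by simp

theorem Circled.norm_evalPt_le_mul_pow_totalDegree (hcirc : Circled K) (hne : K.Nonempty)
    {z : ℂ × ℂ} {b : ℝ} (hb : b ∈ upperBounds (homCandSet K z)) (hb1 : 1 ≤ b)
    {p : MvPolynomial (Fin 2) ℂ} {M : ℝ} (hM : 0 < M) (hp : ∀ x ∈ K, ‖evalPt p x‖ ≤ M) :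
    ‖evalPt p z‖ ≤ M * b ^ p.totalDegree := by
  refine le_of_forall_pow_le_mul_pow (c := p.totalDegree) (by positivity) fun n => ?_
  have hpow : ∀ y, evalPt (p ^ n) y = evalPt p y ^ n := fun y => by simp [evalPt]
  have hpn := hcirc.norm_evalPt_le_totalDegree_succ_mul hne hb hb1 (p := p ^ n)
    (pow_pos hM n) fun x hx => by
      rw [hpow, norm_pow]; exact pow_le_pow_left₀ (norm_nonneg _) (hp x hx) n
  rw [hpow, norm_pow] at hpn
  calc ‖evalPt p z‖ ^ n ≤ ((p ^ n).totalDegree + 1) * (M ^ n * b ^ (p ^ n).totalDegree) := hpn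
    _ ≤ (p.totalDegree * n + 1) * (M ^ n * b ^ (n * p.totalDegree)) := by
        gcongr
        · rw [mul_comm]; exact_mod_cast totalDegree_pow p n
        · exact totalDegree_pow p n
    _ = (p.totalDegree * n + 1) * (M * b ^ p.totalDegree) ^ n := by ring

theorem le_exp_VK_of_mem_homCandSet {z : ℂ × ℂ} (hbdd : BddAbove (candSet K z)) {r : ℝ}
    (hr : r ∈ homCandSet K z) : r ≤ Real.exp (VK K z) := by
  obtain ⟨q, d, hd, hq, hqK, rfl⟩ := hr
  rcases (norm_nonneg (evalPt q z)).eq_or_lt with h0 | hpos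
  · rw [← h0, Real.zero_rpow (by positivity)]
    exact (Real.exp_pos _).le
  have hq0 : q ≠ 0 := by rintro rfl; simp [evalPt] at hpos
  have hcand : (d : ℝ)⁻¹ * Real.log ‖evalPt q z‖ ∈ candSet K z :=
    ⟨q, by rw [hq.totalDegree hq0]; omega, hqK, by rw [hq.totalDegree hq0]⟩
  rw [Real.rpow_def_of_pos hpos, mul_comm]
  exact Real.exp_le_exp.2 ((le_csSup hbdd hcand).trans (le_max_right _ _))

theorem Regular.bddAbove_homCandSet (hreg : Regular K) (z : ℂ × ℂ) :
    BddAbove (homCandSet K z) :=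
  ⟨_, fun _ hr => le_exp_VK_of_mem_homCandSet (hreg.1 z) hr⟩

theorem Regular.mem_upperBounds_homCandSet (hreg : Regular K) {z : ℂ × ℂ} {b : ℝ}
    (hb : homExtremal K z ≤ b) : b ∈ upperBounds (homCandSet K z) :=
  fun _ hr => (le_csSup (hreg.bddAbove_homCandSet z) hr).trans hb

/-- Over the empty set every polynomial competes, and `C c * X 0` contributes `log c` at
`(1, 0)`. -/
theorem Regular.nonempty (hreg : Regular K) : K.Nonempty := by
  rw [Set.nonempty_iff_ne_empty]
  rintro rfl
  obtain ⟨B, hB⟩ := hreg.1 (1, 0)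
  set p : MvPolynomial (Fin 2) ℂ := C (Real.exp (B + 1) : ℂ) * X 0
  have hdeg : p.totalDegree = 1 := (isHomogeneous_C_mul_X _ 0).totalDegree
    (mul_ne_zero (C_ne_zero.2 (by exact_mod_cast (Real.exp_pos _).ne')) (X_ne_zero 0))
  have hcand : B + 1 ∈ candSet ∅ (1, 0) :=
    ⟨p, hdeg.ge, by simp, by rw [hdeg]; simp [p, evalPt, Complex.norm_exp]⟩
  linarith [hB hcand]

theorem exp_VK_eq_max_one_homExtremal (hreg : Regular K) (hcirc : Circled K) (z : ℂ × ℂ) :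
    Real.exp (VK K z) = max 1 (homExtremal K z) := by
  set b := max 1 (homExtremal K z)
  have hb1 : 1 ≤ b := le_max_left _ _
  refine le_antisymm ?_ ?_
  · rw [← Real.le_log_iff_exp_le (by positivity)]
    refine max_le (Real.log_nonneg hb1) (Real.sSup_le ?_ (Real.log_nonneg hb1))
    rintro _ ⟨p, hd, hpK, rfl⟩
    have hpz := hcirc.norm_evalPt_le_mul_pow_totalDegree hreg.nonempty
      (hreg.mem_upperBounds_homCandSet (le_max_right _ _)) hb1 one_pos hpK
    rw [one_mul] at hpz
    rw [inv_mul_le_iff₀ (by exact_mod_cast hd), ← Real.log_pow]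
    rcases (norm_nonneg (evalPt p z)).eq_or_lt with h0 | hpos
    · rw [← h0, Real.log_zero]
      exact Real.log_nonneg (one_le_pow₀ hb1)
    · exact Real.log_le_log hpos hpz
  · exact max_le (Real.one_le_exp (le_max_left _ _))
      (Real.sSup_le (fun _ hr => le_exp_VK_of_mem_homCandSet (hreg.1 z) hr) (Real.exp_pos _).le)

theorem mem_iff_homExtremal_le_one (hK : IsCompact K) (hreg : Regular K) (hcirc : Circled K)
    (hpc : PolyConvex K) (z : ℂ × ℂ) : z ∈ K ↔ homExtremal K z ≤ 1 := by
  refine ⟨fun hz => Real.sSup_le ?_ zero_le_one, fun hz => ?_⟩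
  · rintro _ ⟨q, d, -, -, hqK, rfl⟩
    exact Real.rpow_le_one (norm_nonneg _) (hqK z hz) (by positivity)
  · rw [hpc]
    intro p
    have hbdd : BddAbove ((fun x => ‖evalPt p x‖) '' K) :=
      (hK.image (continuous_evalPt p).norm).bddAbove
    obtain ⟨x₀, hx₀⟩ := hreg.nonempty
    refine le_of_forall_pos_le_add fun ε hε => ?_
    have := hcirc.norm_evalPt_le_mul_pow_totalDegree ⟨x₀, hx₀⟩
      (hreg.mem_upperBounds_homCandSet hz) le_rfl
      ((norm_nonneg _).trans_lt (lt_add_of_le_of_pos (le_csSup hbdd ⟨x₀, hx₀, rfl⟩) hε))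
      fun x hx => (le_csSup hbdd ⟨x, hx, rfl⟩).trans (le_add_of_nonneg_right hε.le)
    rwa [one_pow, mul_one] at this

theorem isOpen_setOf_homExtremal_lt_one (hreg : Regular K) (hcirc : Circled K) :
    IsOpen {z | homExtremal K z < 1} := by
  -- `exp (V_K (2z)) = max 1 (2 Φ_K(z))`, and the left side is continuous
  have hset : {z | homExtremal K z < 1} = {z | Real.exp (VK K (2 * z.1, 2 * z.2)) < 2} := by
    ext z
    simp only [Set.mem_ofPred_eq, exp_VK_eq_max_one_homExtremal hreg hcirc, homExtremal_mul,
      Complex.norm_two, max_lt_iff, one_lt_two, true_and]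
    constructor <;> intro h <;> linarith
  rw [hset]
  exact isOpen_lt (Real.continuous_exp.comp (hreg.2.comp (by fun_prop))) continuous_const

theorem interior_eq_setOf_homExtremal_lt_one (hK : IsCompact K) (hreg : Regular K)
    (hcirc : Circled K) (hpc : PolyConvex K) : interior K = {z | homExtremal K z < 1} := by
  refine subset_antisymm (fun z hz => ?_) (interior_maximal (fun z hz =>
    (mem_iff_homExtremal_le_one hK hreg hcirc hpc z).2 (le_of_lt hz))
    (isOpen_setOf_homExtremal_lt_one hreg hcirc))
  -- `t z ∈ K` for some real `t > 1`, and `Φ_K (t z) = t Φ_K(z)`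
  have hscale : Continuous fun t : ℝ => ((t : ℂ) * z.1, (t : ℂ) * z.2) := by fun_prop
  have hnhds : ∀ᶠ t : ℝ in 𝓝 1, ((t : ℂ) * z.1, (t : ℂ) * z.2) ∈ K := by
    refine (hscale.tendsto 1).eventually (mem_interior_iff_mem_nhds.1 ?_) |>.mono
      fun _ h => interior_subset h
    simpa using hz
  obtain ⟨t, htK, ht⟩ := ((eventually_nhdsWithin_of_eventually_nhds hnhds).and
    self_mem_nhdsWithin : ∀ᶠ t in 𝓝[>] (1 : ℝ), _ ∧ 1 < t).exists
  have := (mem_iff_homExtremal_le_one hK hreg hcirc hpc _).1 htK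
  rw [homExtremal_mul, Complex.norm_real, Real.norm_of_nonneg (by linarith)] at this
  show homExtremal K z < 1
  nlinarith [homExtremal_nonneg K z]

theorem frontier_eq_setOf_homExtremal_eq_one (hK : IsCompact K) (hreg : Regular K)
    (hcirc : Circled K) (hpc : PolyConvex K) : frontier K = {z | homExtremal K z = 1} := by
  ext z
  rw [frontier, hK.isClosed.closure_eq, interior_eq_setOf_homExtremal_lt_one hK hreg hcirc hpc,
    Set.mem_sdiff, mem_iff_homExtremal_le_one hK hreg hcirc hpc]
  simp only [Set.mem_ofPred_eq, not_lt]
  exact ⟨fun h => le_antisymm h.1 h.2, fun h => ⟨h.le, h.ge⟩⟩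

theorem robin_eq_log_homExtremal (hreg : Regular K) (hcirc : Circled K) (z : ℂ × ℂ) :
    robin K z = ENNReal.log (ENNReal.ofReal (homExtremal K z)) := by
  set s := homExtremal K z
  -- for `‖l‖ ≥ 1`, `V_K(l z) - log ‖l‖ = log (max 1 (‖l‖ s)) - log ‖l‖ = log (max ‖l‖⁻¹ s)`
  have heq : ∀ᶠ l : ℂ in Bornology.cobounded ℂ, ENNReal.log (ENNReal.ofReal (max ‖l‖⁻¹ s)) =
      ((VK K (l * z.1, l * z.2) - Real.log ‖l‖ : ℝ) : EReal) := by
    filter_upwards [eventually_cobounded_le_norm 1] with l hl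
    have hl0 : 0 < ‖l‖ := one_pos.trans_le hl
    have hmax : 0 < max ‖l‖⁻¹ s := lt_max_of_lt_left (inv_pos.2 hl0)
    have hVK : VK K (l * z.1, l * z.2) = Real.log ‖l‖ + Real.log (max ‖l‖⁻¹ s) := by
      rw [← Real.log_mul hl0.ne' hmax.ne', mul_max_of_nonneg _ _ hl0.le,
        mul_inv_cancel₀ hl0.ne', ← homExtremal_mul,
        ← exp_VK_eq_max_one_homExtremal hreg hcirc, Real.log_exp]
    rw [ENNReal.log_ofReal_of_pos hmax, hVK, add_sub_cancel_left]
  have hlim : Tendsto (fun l : ℂ => max ‖l‖⁻¹ s) (Bornology.cobounded ℂ) (𝓝 s) := by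
    have := (tendsto_inv_atTop_zero.comp (tendsto_norm_cobounded_atTop (E := ℂ))).max
      (tendsto_const_nhds (x := s))
    rwa [max_eq_right (homExtremal_nonneg K z)] at this
  rw [robin, comap_norm_atTop (E := ℂ)]
  exact Tendsto.limsup_eq <| ((ENNReal.continuous_log.tendsto _).comp
    ((ENNReal.continuous_ofReal.tendsto _).comp hlim)).congr' heq

end

theorem statement13 (K : Set (ℂ × ℂ)) (hK : IsCompact K)
    (hreg : Regular K) (hcirc : Circled K) (hpc : PolyConvex K) :
    frontier K = {z : ℂ × ℂ | robin K z = (0 : EReal)} := by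
  rw [frontier_eq_setOf_homExtremal_eq_one hK hreg hcirc hpc]
  ext z
  rw [Set.mem_ofPred_eq, Set.mem_ofPred_eq, robin_eq_log_homExtremal hreg hcirc,
    ENNReal.log_eq_one_iff, ENNReal.ofReal_eq_one]
end
end
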